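/- arXiv:2504.07865 — 2 statements merged into one kernel-verified Lean document; each statement's English description precedes it below -/
import Mathlib

section
/- Let Γ be a countable discrete abelian group and let π : (X,T_X) → (Y,T_Y) be an isometric extension of topological dynamical Γ-systems on compact metric spaces. If (Y,T_Y) is distal, then (X,T_X) is distal. -/
/-!
Let `x ≠ y`. If `π x ≠ π y`, the images stay `ε`-apart by distality of `Y`, and uniform
continuity of `π` pulls this back to a lower bound on `dist (T γ x) (T γ y)`. If `π x = π y`,
the fibre distance `c = d (π x) x y > 0` is preserved along the orbit of `(x, y)`, so the orbit
stays in the compact set of pairs in a common fibre at fibre distance `c`; this set misses the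
diagonal, so `dist` has a positive minimum on it.
-/

/-- A topological dynamical `Γ`-system `(X, T)` is *distal* if for every pair of distinct
points `x ≠ y` one has `inf_γ dist (T γ x) (T γ y) > 0`. -/
def IsDistal {Γ X : Type*} [AddCommGroup Γ] [MetricSpace X] (T : Γ → X → X) : Prop :=
  ∀ x y : X, x ≠ y → ∃ ε > 0, ∀ γ : Γ, ε ≤ dist (T γ x) (T γ y)

/-- `π : X → Y` is an *isometric extension* of dynamical systems: there is a family of metrics
`d y` on the fibers `π ⁻¹' {y}` which is equivariant, glues to a continuous function on
`{(x₁,x₂) | π x₁ = π x₂}`, and for which any two fibers are isometric. -/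
def IsIsometricExtension {Γ X Y : Type*} [AddCommGroup Γ]
    [TopologicalSpace X] [TopologicalSpace Y]
    (TX : Γ → X → X) (TY : Γ → Y → Y) (π : X → Y) : Prop :=
  ∃ d : Y → X → X → ℝ,
    (∀ y x₁ x₂, π x₁ = y → π x₂ = y → 0 ≤ d y x₁ x₂) ∧
    (∀ y x₁ x₂, π x₁ = y → π x₂ = y → d y x₁ x₂ = d y x₂ x₁) ∧
    (∀ y x₁ x₂, π x₁ = y → π x₂ = y → (d y x₁ x₂ = 0 ↔ x₁ = x₂)) ∧
    (∀ y x₁ x₂ x₃, π x₁ = y → π x₂ = y → π x₃ = y →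
      d y x₁ x₃ ≤ d y x₁ x₂ + d y x₂ x₃) ∧
    (∀ (γ : Γ) (y : Y) (x₁ x₂ : X), π x₁ = y → π x₂ = y →
      d (TY γ y) (TX γ x₁) (TX γ x₂) = d y x₁ x₂) ∧
    ContinuousOn (fun p : X × X => d (π p.1) p.1 p.2) {p : X × X | π p.1 = π p.2} ∧
    (∀ y₁ y₂ : Y, ∃ ξ : X → X, Set.BijOn ξ (π ⁻¹' {y₁}) (π ⁻¹' {y₂}) ∧
      ∀ x₁ x₂, π x₁ = y₁ → π x₂ = y₁ → d y₂ (ξ x₁) (ξ x₂) = d y₁ x₁ x₂)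

def IsDistalPair {Γ X : Type*} [PseudoMetricSpace X] (T : Γ → X → X) (x y : X) : Prop :=
  ∃ ε > 0, ∀ γ : Γ, ε ≤ dist (T γ x) (T γ y)

section DistalPair

variable {Γ X Y : Type*}

theorem isDistalPair_of_map [PseudoMetricSpace X] [PseudoMetricSpace Y] {TX : Γ → X → X} {TY : Γ → Y → Y}
    {π : X → Y} (hπ : UniformContinuous π) (hπT : ∀ γ x, π (TX γ x) = TY γ (π x)) {x y : X}
    (h : IsDistalPair TY (π x) (π y)) : IsDistalPair TX x y := by
  obtain ⟨ε, hε, hεγ⟩ := h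
  obtain ⟨δ, hδ, hδε⟩ := Metric.uniformContinuous_iff.mp hπ ε hε
  refine ⟨δ, hδ, fun γ => not_lt.mp fun hlt => ?_⟩
  have hclose := hδε hlt
  rw [hπT, hπT] at hclose
  exact (hεγ γ).not_gt hclose

theorem isDistalPair_of_invariant [MetricSpace X] [CompactSpace X] {T : Γ → X → X} {F : Set (X × X)}
    (hF : IsClosed F) {D : X × X → ℝ} (hD : ContinuousOn D F)
    (hdiag : ∀ z, (z, z) ∈ F → D (z, z) = 0) {x y : X} (horbit : ∀ γ, (T γ x, T γ y) ∈ F)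
    (hinv : ∀ γ, D (T γ x, T γ y) = D (x, y)) (hxy : D (x, y) ≠ 0) : IsDistalPair T x y := by
  set K := F ∩ D ⁻¹' {D (x, y)}
  have hK : IsCompact K := (hD.preimage_isClosed_of_isClosed hF isClosed_singleton).isCompact
  have hoff : ∀ p ∈ K, 0 < dist p.1 p.2 := by
    rintro ⟨z, w⟩ ⟨hzF, hzD⟩
    refine dist_pos.mpr fun (hzw : z = w) => hxy ?_
    subst hzw
    exact hzD.symm.trans (hdiag z hzF)
  obtain ⟨ε, hε, hεK⟩ := hK.exists_forall_le' continuous_dist.continuousOn hoff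
  exact ⟨ε, hε, fun γ => hεK _ ⟨horbit γ, hinv γ⟩⟩

end DistalPair

theorem isometric_extension_of_distal_is_distal_general
    {Γ X Y : Type*} [AddCommGroup Γ]
    [MetricSpace X] [CompactSpace X] [MetricSpace Y]
    (TX : Γ → X ≃ₜ X) (TY : Γ → Y ≃ₜ Y)
    (π : X → Y) (hπc : Continuous π)
    (hπT : ∀ (γ : Γ) (x : X), π (TX γ x) = TY γ (π x))
    (hiso : IsIsometricExtension (fun γ x => TX γ x) (fun γ y => TY γ y) π)
    (hY : IsDistal (fun γ y => TY γ y)) :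
    IsDistal (fun γ x => TX γ x) := by
  obtain ⟨d, -, -, hd_eq_zero, -, hd_equivariant, hd_cont, -⟩ := hiso
  intro x y hxy
  by_cases hfiber : π x = π y
  · refine isDistalPair_of_invariant (F := {p : X × X | π p.1 = π p.2})
      (isClosed_eq (hπc.comp continuous_fst) (hπc.comp continuous_snd)) hd_cont
      (fun z _ => (hd_eq_zero _ z z rfl rfl).mpr rfl) (fun γ => ?_) (fun γ => ?_)
      (fun h => hxy <| (hd_eq_zero _ x y rfl hfiber.symm).mp h)
    · simp only [Set.mem_ofPred_eq, hπT, hfiber]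
    · simp only [hπT]
      exact hd_equivariant γ _ x y rfl hfiber.symm
  · exact isDistalPair_of_map (CompactSpace.uniformContinuous_of_continuous hπc) hπT
      (hY _ _ hfiber)

/-- If `π : (X,T_X) → (Y,T_Y)` is an isometric extension of topological
dynamical `Γ`-systems on compact metric spaces and `(Y,T_Y)` is distal, then `(X,T_X)` is
distal. -/
theorem isometric_extension_of_distal_is_distal
    {Γ X Y : Type*} [AddCommGroup Γ] [Countable Γ]
    [MetricSpace X] [CompactSpace X] [MetricSpace Y] [CompactSpace Y]
    (TX : Γ → X ≃ₜ X) (TY : Γ → Y ≃ₜ Y)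
    (hTX : ∀ (γ δ : Γ) (x : X), TX (γ + δ) x = TX γ (TX δ x))
    (hTY : ∀ (γ δ : Γ) (y : Y), TY (γ + δ) y = TY γ (TY δ y))
    (π : X → Y) (hπc : Continuous π) (hπs : Function.Surjective π)
    (hπT : ∀ (γ : Γ) (x : X), π (TX γ x) = TY γ (π x))
    (hiso : IsIsometricExtension (fun γ x => TX γ x) (fun γ y => TY γ y) π)
    (hY : IsDistal (fun γ y => TY γ y)) :
    IsDistal (fun γ x => TX γ x) :=
  isometric_extension_of_distal_is_distal_general TX TY π hπc hπT hiso hY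
end

section
/- Let Γ be a countable discrete abelian group, (X,T_X) a topological dynamical Γ-system, x_0 ∈ X, and suppose (x_0, x_1, …, x_{k-1}) is a k-term Erdős progression with x_i ∈ U_i for open sets U_1,…,U_{k-1} ⊆ X. Then there exists an infinite set B ⊆ Γ such that B^{⊕m} ⊆ A_m for every m ∈ {1,…,k−1}, where A_m = {γ ∈ Γ : T_X^γ x_0 ∈ U_m}. -/
/-!
Choose `B = {b₁, b₂, …}` greedily among the `γ n`, keeping the invariant that for every finite
`F ⊆ {b₁, …, bⱼ}` and every `i`, `T^{∑ F} xᵢ ∈ U_{i + |F|}`. A new element `γ n` preserves it for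
large `n`: `T^{γ n + ∑ F} xᵢ = T^{∑ F} (T^{γ n} xᵢ) → T^{∑ F} x_{i+1} ∈ U_{i + 1 + |F|}`, an open
condition, and only finitely many pairs `(F, i)` are involved. The case `i = 0` is the claim.
-/

open Filter Topology

/-- The `m`-fold restricted sumset `B^{⊕m}` of sums of `m` pairwise distinct elements. -/
def restrictedSumset {Γ : Type*} [AddCommGroup Γ] (B : Set Γ) (m : ℕ) : Set Γ :=
  {s | ∃ f : Fin m → Γ, Function.Injective f ∧ (∀ i, f i ∈ B) ∧ s = ∑ i, f i}

open Finset

theorem exists_infinite_forall_finset_subset_of_exists_insert {α : Type*} [DecidableEq α]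
    {P : Finset α → Prop} (h₀ : P ∅) (hstep : ∀ S, P S → ∃ b ∉ S, P (insert b S)) :
    ∃ B : Set α, B.Infinite ∧ ∀ F : Finset α, ↑F ⊆ B → ∃ S, F ⊆ S ∧ P S := by
  choose next hnext_notMem hnext using hstep
  let chain : ℕ → {S // P S} :=
    Nat.rec ⟨∅, h₀⟩ fun _ S => ⟨insert (next S.1 S.2) S.1, hnext S.1 S.2⟩
  have hmono : Monotone fun n => ((chain n).1 : Set α) :=
    monotone_nat_of_le_succ fun n => by simp [chain]
  have hcard : ∀ n, #(chain n).1 = n := by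
    intro n
    induction n with
    | zero => rfl
    | succ n ih => exact (card_insert_of_notMem (hnext_notMem _ _)).trans (congrArg (· + 1) ih)
  refine ⟨⋃ n, ((chain n).1 : Set α), Set.infinite_iUnion fun m n h => ?_, fun F hF => ?_⟩
  · rw [← hcard m, ← hcard n, coe_inj.mp h]
  · obtain ⟨n, hn⟩ := hmono.directed_le.exists_mem_subset_of_finset_subset_biUnion hF
    exact ⟨(chain n).1, coe_subset.mp hn, (chain n).2⟩

theorem exists_finset_of_mem_restrictedSumset {Γ : Type*} [AddCommGroup Γ] {B : Set Γ} {m : ℕ}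
    {s : Γ} (hs : s ∈ restrictedSumset B m) :
    ∃ F : Finset Γ, ↑F ⊆ B ∧ #F = m ∧ s = ∑ b ∈ F, b := by
  classical
  obtain ⟨f, hf, hfB, rfl⟩ := hs
  refine ⟨univ.image f, by simpa [Set.range_subset_iff] using hfB, ?_, ?_⟩
  · rw [card_image_of_injective _ hf, card_univ, Fintype.card_fin]
  · exact (sum_image (f := id) fun a _ b _ h => hf h).symm

section SumsetCompatible

variable {Γ X : Type*} [AddCommMonoid Γ] [AddAction Γ X]
  (x : ℕ → X) (U : ℕ → Set X) (K : ℕ)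

/-- Asking this for all `x i`, not only `x 0`, is what lets the property survive adding a new
element to `S`. -/
def SumsetCompatible (S : Finset Γ) : Prop :=
  ∀ F ⊆ S, ∀ i, 1 ≤ i + #F → i + #F ≤ K → (∑ b ∈ F, b) +ᵥ x i ∈ U (i + #F)

variable {x U K}

theorem sumsetCompatible_empty (hxU : ∀ m, 1 ≤ m → m ≤ K → x m ∈ U m) :
    SumsetCompatible x U K (∅ : Finset Γ) := by
  intro F hF i h₁ hK
  rw [subset_empty.mp hF] at h₁ hK ⊢
  simpa using hxU i h₁ hK

variable {S : Finset Γ}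

theorem sumsetCompatible_insert [DecidableEq Γ] {b : Γ} (hS : SumsetCompatible x U K S)
    (hb : ∀ F ⊆ S, ∀ i, i + #F + 1 ≤ K → (b + ∑ c ∈ F, c) +ᵥ x i ∈ U (i + #F + 1)) :
    SumsetCompatible x U K (insert b S) := by
  intro F hF i h₁ hK
  by_cases hbF : b ∈ F
  · have hF' : F.erase b ⊆ S := (erase_subset_erase b hF).trans (erase_insert_subset b S)
    rw [← card_erase_add_one hbF] at h₁ hK ⊢
    rw [← add_sum_erase F (fun c => c) hbF]
    exact hb _ hF' i hK
  · exact hS F ((subset_insert_iff_of_notMem hbF).mp hF) i h₁ hK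

namespace SumsetCompatible

variable [TopologicalSpace X] [ContinuousConstVAdd Γ X] {γ : ℕ → Γ}

theorem eventually_insert [DecidableEq Γ] (hS : SumsetCompatible x U K S)
    (hU : ∀ m, 1 ≤ m → m ≤ K → IsOpen (U m))
    (hγ : ∀ i < K, Tendsto (fun n => γ n +ᵥ x i) atTop (𝓝 (x (i + 1)))) :
    ∀ᶠ n in atTop, SumsetCompatible x U K (insert (γ n) S) := by
  have key : ∀ᶠ n in atTop, ∀ F ∈ S.powerset, ∀ i ∈ range K,
      i + #F + 1 ≤ K → (γ n + ∑ c ∈ F, c) +ᵥ x i ∈ U (i + #F + 1) := by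
    simp only [eventually_all_finset]
    intro F hF i hi
    by_cases hK : i + #F + 1 ≤ K
    · have hlim : Tendsto (fun n => (∑ c ∈ F, c) +ᵥ (γ n +ᵥ x i)) atTop
          (𝓝 ((∑ c ∈ F, c) +ᵥ x (i + 1))) :=
        ((continuous_const_vadd _).tendsto _).comp (hγ i (by omega))
      have hmem := hS F (mem_powerset.mp hF) (i + 1) (by omega) (by omega)
      rw [add_right_comm] at hmem
      filter_upwards [hlim.eventually_mem ((hU _ (by omega) hK).mem_nhds hmem)] with n hn _
      rwa [add_comm (γ n), add_vadd]
    · exact Eventually.of_forall fun _ h => absurd h hK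
  filter_upwards [key] with n hn
  exact sumsetCompatible_insert hS fun F hF i hK =>
    hn F (mem_powerset.mpr hF) i (mem_range.mpr (by omega)) hK

theorem exists_insert [DecidableEq Γ] (hS : SumsetCompatible x U K S)
    (hU : ∀ m, 1 ≤ m → m ≤ K → IsOpen (U m)) (hγinj : Function.Injective γ)
    (hγ : ∀ i < K, Tendsto (fun n => γ n +ᵥ x i) atTop (𝓝 (x (i + 1)))) :
    ∃ b ∉ S, SumsetCompatible x U K (insert b S) := by
  have hnotMem : ∀ᶠ n in atTop, γ n ∉ S := by
    rw [← Nat.cofinite_eq_atTop]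
    exact hγinj.tendsto_cofinite.eventually S.finite_toSet.compl_mem_cofinite
  obtain ⟨n, hn, hSn⟩ := (hnotMem.and (hS.eventually_insert hU hγ)).exists
  exact ⟨γ n, hn, hSn⟩

end SumsetCompatible

end SumsetCompatible

/-- `T 0 = id` because `T 0` is injective and idempotent. -/
abbrev addActionOfHomeomorph {Γ X : Type*} [AddMonoid Γ] [TopologicalSpace X] (T : Γ → X ≃ₜ X)
    (hT : ∀ (γ δ : Γ) (y : X), T (γ + δ) y = T γ (T δ y)) : AddAction Γ X where
  vadd γ y := T γ y
  zero_vadd y := show T 0 y = y from (T 0).injective (by simpa using (hT 0 0 y).symm)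
  add_vadd := hT

theorem erdos_progression_gives_restricted_sumsets_general
    {Γ X : Type*} [AddCommGroup Γ]
    [MetricSpace X]
    (T : Γ → X ≃ₜ X)
    (hT : ∀ (γ δ : Γ) (y : X), T (γ + δ) y = T γ (T δ y))
    (k : ℕ)
    (x : ℕ → X)
    (hEP : ∃ γ : ℕ → Γ, Function.Injective γ ∧
      ∀ i : ℕ, i < k - 1 →
        Tendsto (fun n => T (γ n) (x i)) atTop (nhds (x (i + 1))))
    (U : ℕ → Set X)
    (hUopen : ∀ m : ℕ, 1 ≤ m → m ≤ k - 1 → IsOpen (U m))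
    (hxU : ∀ m : ℕ, 1 ≤ m → m ≤ k - 1 → x m ∈ U m) :
    ∃ B : Set Γ, B.Infinite ∧
      ∀ m : ℕ, 1 ≤ m → m ≤ k - 1 →
        restrictedSumset B m ⊆ {γ : Γ | T γ (x 0) ∈ U m} := by
  classical
  let _ : AddAction Γ X := addActionOfHomeomorph T hT
  have _ : ContinuousConstVAdd Γ X := ⟨fun γ => (T γ).continuous⟩
  obtain ⟨γ, hγinj, hγ⟩ := hEP
  obtain ⟨B, hB, hBsub⟩ := exists_infinite_forall_finset_subset_of_exists_insert
    (sumsetCompatible_empty hxU) fun S hS => hS.exists_insert hUopen hγinj hγ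
  refine ⟨B, hB, fun m hm hmk s hs => ?_⟩
  obtain ⟨F, hFB, rfl, rfl⟩ := exists_finset_of_mem_restrictedSumset hs
  obtain ⟨S, hFS, hS⟩ := hBsub F hFB
  have hF := hS F hFS 0 (by omega) (by omega)
  rwa [zero_add] at hF

/-- Suppose `(x 0, x 1, …, x (k-1))` is a `k`-term Erdős progression in
the topological dynamical `Γ`-system `(X,T)` — i.e. there is a sequence `(γ n)` of distinct
elements of `Γ` with `T^{γ n} (x i) → x (i+1)` for all `i < k-1` — and `x m ∈ U m` for open
sets `U m ⊆ X`, `1 ≤ m ≤ k-1`. Then there exists an infinite set `B ⊆ Γ` such that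
`B^{⊕m} ⊆ A_m = {γ : T^γ (x 0) ∈ U m}` for every `1 ≤ m ≤ k-1`. -/
theorem erdos_progression_gives_restricted_sumsets
    {Γ X : Type*} [AddCommGroup Γ] [Countable Γ]
    [MetricSpace X] [CompactSpace X]
    (T : Γ → X ≃ₜ X)
    (hT : ∀ (γ δ : Γ) (y : X), T (γ + δ) y = T γ (T δ y))
    (k : ℕ) (hk : 2 ≤ k)
    (x : ℕ → X)
    (hEP : ∃ γ : ℕ → Γ, Function.Injective γ ∧
      ∀ i : ℕ, i < k - 1 →
        Tendsto (fun n => T (γ n) (x i)) atTop (nhds (x (i + 1))))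
    (U : ℕ → Set X)
    (hUopen : ∀ m : ℕ, 1 ≤ m → m ≤ k - 1 → IsOpen (U m))
    (hxU : ∀ m : ℕ, 1 ≤ m → m ≤ k - 1 → x m ∈ U m) :
    ∃ B : Set Γ, B.Infinite ∧
      ∀ m : ℕ, 1 ≤ m → m ≤ k - 1 →
        restrictedSumset B m ⊆ {γ : Γ | T γ (x 0) ∈ U m} :=
  erdos_progression_gives_restricted_sumsets_general T hT k x hEP U hUopen hxU
end
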